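/- Asymptotic expansion of the truncated kernel integral: let n ≥ 2 and k ∈ ℕ with n + 2k ≥ 4. There is a constant C = C(n,k) such that for all ε > 0, all ξ₁ ≠ 0 and all β ≥ ε|ξ₁|, | ∫_{ξ′ ∈ ℝ^{n−1}, |ξ′| ≤ β} ξ₁² |ξ′|^{2k} / (ε²ξ₁² + |ξ′|²) dξ′ − (σ_{n−2}/(n−3+2k)) ξ₁² β^{n−3+2k} | ≤ C ε |ξ₁|³ β^{n−4+2k}. -/

import Mathlib

/-!
In polar coordinates, with `a = ε|ξ₁|` and `m = n + 2k - 4`, the integral is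
`σ_{n-2} ξ₁² ∫₀^β r^(m+2) / (a² + r²) dr`, while the main term is `σ_{n-2} ξ₁² ∫₀^β r^m dr`.
Their difference is `-σ_{n-2} ξ₁² ∫₀^β r^m a² / (a² + r²) dr`, and since `r^m ≤ β^m` this is at
most `σ_{n-2} ξ₁² β^m a arctan (β / a) ≤ σ_{n-2} ξ₁² (π / 2) a β^m` in absolute value.
-/

open MeasureTheory Real Filter Topology ENNReal

/-- Surface measure of the unit sphere S^{n-2} ⊂ ℝ^{n-1}: σ_{n-2} = 2π^{(n-1)/2}/Γ((n-1)/2). -/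
noncomputable def sphereArea (n : ℕ) : ℝ :=
  2 * π ^ (((n:ℝ) - 1)/2) / Real.Gamma (((n:ℝ) - 1)/2)

open Metric Module

theorem setIntegral_closedBall_fun_norm_addHaar {E : Type*} [NormedAddCommGroup E]
    [NormedSpace ℝ E] [Nontrivial E] [FiniteDimensional ℝ E] [MeasurableSpace E] [BorelSpace E]
    (μ : Measure E) [μ.IsAddHaarMeasure] (g : ℝ → ℝ) {β : ℝ} (hβ : 0 ≤ β) :
    ∫ x in closedBall (0 : E) β, g ‖x‖ ∂μ
      = finrank ℝ E * μ.real (ball 0 1) * ∫ r in (0:ℝ)..β, r ^ (finrank ℝ E - 1) * g r := by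
  have hind : (closedBall (0 : E) β).indicator (fun x => g ‖x‖)
      = fun x => (Set.Iic β).indicator g ‖x‖ := by
    ext x
    simp [Set.indicator]
  rw [← integral_indicator measurableSet_closedBall, hind, integral_fun_norm_addHaar μ,
    intervalIntegral.integral_of_le hβ, ← Set.Ioi_inter_Iic,
    ← setIntegral_indicator measurableSet_Iic]
  simp only [nsmul_eq_mul, smul_eq_mul, mul_assoc]
  congr 3 with r
  by_cases h : r ∈ Set.Iic β <;> simp [h]

theorem natCast_mul_volume_real_ball_one (d : ℕ) [NeZero d] :
    d * volume.real (ball (0 : EuclideanSpace ℝ (Fin d)) 1)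
      = 2 * π ^ ((d : ℝ) / 2) / Gamma ((d : ℝ) / 2) := by
  have hd : (d : ℝ) ≠ 0 := NeZero.ne _
  rw [measureReal_def, EuclideanSpace.volume_ball, Fintype.card_fin, ENNReal.ofReal_one, one_pow,
    one_mul, ENNReal.toReal_ofReal (by positivity), Gamma_add_one (by positivity), sqrt_eq_rpow,
    ← Real.rpow_natCast, ← rpow_mul pi_pos.le]
  field_simp

theorem sphereArea_eq (n : ℕ) (hn : 2 ≤ n) :
    sphereArea n = (n - 1 : ℕ) * volume.real (ball (0 : EuclideanSpace ℝ (Fin (n - 1))) 1) := by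
  have : NeZero (n - 1) := ⟨by omega⟩
  rw [natCast_mul_volume_real_ball_one, sphereArea, Nat.cast_sub (by omega), Nat.cast_one]

lemma integral_sq_div_sq_add_sq {a : ℝ} (ha : a ≠ 0) (β : ℝ) :
    ∫ r in (0:ℝ)..β, a ^ 2 / (a ^ 2 + r ^ 2) = a * arctan (β / a) := by
  have h : ∀ r : ℝ, a ^ 2 / (a ^ 2 + r ^ 2) = 1 / (1 + (r / a) ^ 2) := fun r => by
    field_simp
  simp_rw [h]
  rw [intervalIntegral.integral_comp_div (fun u : ℝ => 1 / (1 + u ^ 2)) ha,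
    integral_one_div_one_add_sq, zero_div, arctan_zero, sub_zero, smul_eq_mul]

lemma abs_integral_pow_div_sq_add_sq_sub_le (m : ℕ) {a β : ℝ} (ha : 0 < a) (hβ : 0 ≤ β) :
    |(∫ r in (0:ℝ)..β, r ^ (m + 2) / (a ^ 2 + r ^ 2)) - β ^ (m + 1) / (m + 1)|
      ≤ π / 2 * a * β ^ m := by
  have hden : ∀ r : ℝ, a ^ 2 + r ^ 2 ≠ 0 := fun r => by positivity
  have hpow : ∫ r in (0:ℝ)..β, r ^ m = β ^ (m + 1) / (m + 1) := by simp [integral_pow]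
  have hdefect : (∫ r in (0:ℝ)..β, r ^ (m + 2) / (a ^ 2 + r ^ 2)) - β ^ (m + 1) / (m + 1)
      = -∫ r in (0:ℝ)..β, r ^ m * (a ^ 2 / (a ^ 2 + r ^ 2)) := by
    rw [← hpow, ← intervalIntegral.integral_sub, ← intervalIntegral.integral_neg]
    · congr 1 with r
      field_simp [hden r]
      ring
    all_goals exact Continuous.intervalIntegrable (by fun_prop (disch := exact hden _)) _ _
  have hnonneg : 0 ≤ ∫ r in (0:ℝ)..β, r ^ m * (a ^ 2 / (a ^ 2 + r ^ 2)) :=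
    intervalIntegral.integral_nonneg hβ fun r hr => by have := hr.1; positivity
  have hle : ∫ r in (0:ℝ)..β, r ^ m * (a ^ 2 / (a ^ 2 + r ^ 2))
      ≤ ∫ r in (0:ℝ)..β, β ^ m * (a ^ 2 / (a ^ 2 + r ^ 2)) := by
    refine intervalIntegral.integral_mono_on hβ ?_ ?_ fun r hr => ?_
    · exact Continuous.intervalIntegrable (by fun_prop (disch := exact hden _)) _ _
    · exact Continuous.intervalIntegrable (by fun_prop (disch := exact hden _)) _ _
    · gcongr
      exacts [hr.1, hr.2]
  rw [hdefect, abs_neg, abs_of_nonneg hnonneg]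
  calc _ ≤ β ^ m * (a * arctan (β / a)) := by
        rwa [intervalIntegral.integral_const_mul, integral_sq_div_sq_add_sq ha.ne'] at hle
    _ ≤ β ^ m * (a * (π / 2)) := by gcongr; exact (arctan_lt_pi_div_two _).le
    _ = π / 2 * a * β ^ m := by ring

theorem integral_closedBall_sq_mul_norm_pow_div (n k : ℕ) (hn : 2 ≤ n) (c ξ₁ : ℝ) {β : ℝ}
    (hβ : 0 ≤ β) :
    ∫ ξ' in closedBall (0 : EuclideanSpace ℝ (Fin (n - 1))) β,
        ξ₁ ^ 2 * ‖ξ'‖ ^ (2 * k) / (c + ‖ξ'‖ ^ 2)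
      = sphereArea n * ξ₁ ^ 2 * ∫ r in (0:ℝ)..β, r ^ (n - 2 + 2 * k) / (c + r ^ 2) := by
  have : Nontrivial (EuclideanSpace ℝ (Fin (n - 1))) := by
    have : NeZero (n - 1) := ⟨by omega⟩
    infer_instance
  rw [setIntegral_closedBall_fun_norm_addHaar (E := EuclideanSpace ℝ (Fin (n - 1))) volume
      (fun r => ξ₁ ^ 2 * r ^ (2 * k) / (c + r ^ 2)) hβ,
    finrank_euclideanSpace_fin, sphereArea_eq n hn, mul_assoc _ (ξ₁ ^ 2),
    ← intervalIntegral.integral_const_mul (ξ₁ ^ 2)]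
  congr 1
  refine intervalIntegral.integral_congr fun r _ => ?_
  rw [show n - 2 = n - 1 - 1 by omega, pow_add]
  ring

/-- asymptotic expansion of the truncated kernel integral. For n ≥ 2, k ∈ ℕ
    with n + 2k ≥ 4 there is C = C(n,k) such that for all ε > 0, ξ₁ ≠ 0 and β ≥ ε|ξ₁|,
    | ∫_{|ξ′|≤β} ξ₁²|ξ′|^{2k}/(ε²ξ₁² + |ξ′|²) dξ′ − σ_{n-2}/(n-3+2k) · ξ₁² β^{n-3+2k} |
      ≤ C ε |ξ₁|³ β^{n-4+2k}. -/
theorem statement13 (n k : ℕ) (hn : 2 ≤ n) (hnk : 4 ≤ n + 2 * k) :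
    ∃ C : ℝ, ∀ (ε ξ₁ β : ℝ), 0 < ε → ξ₁ ≠ 0 → ε * |ξ₁| ≤ β →
      |(∫ ξ' in Metric.closedBall (0 : EuclideanSpace ℝ (Fin (n-1))) β,
          ξ₁^2 * ‖ξ'‖^(2*k) / (ε^2 * ξ₁^2 + ‖ξ'‖^2)) -
        sphereArea n / ((n:ℝ) - 3 + 2*(k:ℝ)) * ξ₁^2 * β ^ ((n:ℝ) - 3 + 2*(k:ℝ))|
      ≤ C * ε * |ξ₁|^3 * β ^ ((n:ℝ) - 4 + 2*(k:ℝ)) := by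
  refine ⟨sphereArea n * (π / 2), fun ε ξ₁ β hε hξ₁ hβ => ?_⟩
  set a := ε * |ξ₁| with ha_def
  have ha : 0 < a := by positivity
  obtain ⟨m, hm⟩ : ∃ m, n - 2 + 2 * k = m + 2 := ⟨n + 2 * k - 4, by omega⟩
  have hexp : (n : ℝ) - 4 + 2 * k = m := by
    have hcast : ((n - 2 + 2 * k : ℕ) : ℝ) = m + 2 := by exact_mod_cast hm
    push_cast [Nat.cast_sub hn] at hcast
    linarith
  have hσ : 0 ≤ sphereArea n := by rw [sphereArea_eq n hn]; positivity
  rw [show ε ^ 2 * ξ₁ ^ 2 = a ^ 2 by rw [mul_pow, sq_abs],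
    integral_closedBall_sq_mul_norm_pow_div n k hn _ _ (ha.trans_le hβ).le, hm,
    show (n : ℝ) - 3 + 2 * k = (m + 1 : ℕ) by push_cast; linarith, hexp, Real.rpow_natCast,
    Real.rpow_natCast]
  set I := ∫ r in (0:ℝ)..β, r ^ (m + 2) / (a ^ 2 + r ^ 2)
  calc _ = |sphereArea n * ξ₁ ^ 2 * (I - β ^ (m + 1) / (m + 1))| := by push_cast; ring_nf
    _ = sphereArea n * ξ₁ ^ 2 * |I - β ^ (m + 1) / (m + 1)| := by
        rw [abs_mul, abs_of_nonneg (by positivity)]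
    _ ≤ sphereArea n * ξ₁ ^ 2 * (π / 2 * a * β ^ m) := by
        gcongr
        exact abs_integral_pow_div_sq_add_sq_sub_le m ha (ha.trans_le hβ).le
    _ = sphereArea n * (π / 2) * ε * |ξ₁| ^ 3 * β ^ m := by rw [ha_def, ← sq_abs ξ₁]; ring
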